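/- Let R = k[x_1,…,x_r] be a standard graded polynomial ring over a field k of characteristic zero, let A = R/I be an artinian standard graded algebra with Hilbert function h_i = dim_k A_i, and let t be the smallest integer such that h_t ≤ t. Suppose that for all i = 1, …, t−1 one has h_{i−1} = ((h_i)_{(i)})^{−1}_{−1}. Then for every linear form L ∈ R_1 satisfying the conclusion of Green's theorem (i.e., dim_k (R/(I+(L)))_d ≤ (h_d)_{<d>} for all d ≥ 1), one has dim_k (R/(I+(L)))_i = h_i − h_{i−1} for all 1 ≤ i ≤ t−1 and dim_k (R/(I+(L)))_i = 0 for all i ≥ t. -/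

import Mathlib

open MvPolynomial Finset

/-- The degree-`i` graded piece of `R/I` (`R = k[x_1,…,x_r]` standard graded),
namely the image of the space of homogeneous polynomials of degree `i`
under the quotient map. -/
noncomputable def quotPiece (k : Type) [Field k] {r : ℕ}
    (I : Ideal (MvPolynomial (Fin r) k)) (i : ℕ) :
    Submodule k (MvPolynomial (Fin r) k ⧸ I) :=
  (homogeneousSubmodule (Fin r) k i).map (Ideal.Quotient.mkₐ k I).toLinearMap

/-- The Hilbert function of `R/I`: `h_i = dim_k (R/I)_i`. -/
noncomputable def hilb (k : Type) [Field k] {r : ℕ}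
    (I : Ideal (MvPolynomial (Fin r) k)) (i : ℕ) : ℕ :=
  Module.finrank k (quotPiece k I i)

/-- `I` is a homogeneous ideal: it contains all homogeneous components of its
elements. -/
def IsHomogIdeal {k : Type} [Field k] {r : ℕ}
    (I : Ideal (MvPolynomial (Fin r) k)) : Prop :=
  ∀ f ∈ I, ∀ n : ℕ, (homogeneousComponent n f : MvPolynomial (Fin r) k) ∈ I

/-- `A = R/I` is artinian: the graded pieces vanish in all high degrees. -/
def ArtinianQuot (k : Type) [Field k] {r : ℕ}
    (I : Ideal (MvPolynomial (Fin r) k)) : Prop :=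
  ∃ N : ℕ, ∀ i ≥ N, hilb k I i = 0

/-- The Weak Lefschetz Property: there is a linear form `L` such that, for
every `i ≥ 0`, multiplication by `L` from the degree-`i` piece of `R/I` to the
degree-`(i+1)` piece has maximal rank, i.e. is injective or surjective. -/
def WLP (k : Type) [Field k] {r : ℕ}
    (I : Ideal (MvPolynomial (Fin r) k)) : Prop :=
  ∃ L ∈ homogeneousSubmodule (Fin r) k 1, ∀ i : ℕ,
    (∀ x ∈ quotPiece k I i, Ideal.Quotient.mk I L * x = 0 → x = 0) ∨
    (∀ y ∈ quotPiece k I (i + 1), ∃ x ∈ quotPiece k I i, Ideal.Quotient.mk I L * x = y)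

/-- `c` (on the indices `j ≤ m ≤ i`) records the `i`-binomial expansion of `n`:
`n = C(c i, i) + C(c (i-1), i-1) + ⋯ + C(c j, j)` where
`c i > c (i-1) > ⋯ > c j ≥ j ≥ 1`. -/
def IsBinExp (n i j : ℕ) (c : ℕ → ℕ) : Prop :=
  1 ≤ j ∧ j ≤ i ∧ j ≤ c j ∧ StrictMonoOn c (Set.Icc j i) ∧
  n = ∑ m ∈ Finset.Icc j i, (c m).choose m

/-!
Write `g` for the Hilbert function of `R/(I+(L))`. Since `I` is homogeneous, the kernel of
`A_i → (R/(I+(L)))_i` is `L·A_{i-1}`, so `g_i ≥ h_i - h_{i-1}`. Pascal's rule splits the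
`i`-binomial expansion as `h_i = (h_i)_{<i>} + ((h_i)_{(i)})^{-1}_{-1}`; under the hypothesis on
`h_{i-1}`, Green's bound reads `g_i ≤ h_i - h_{i-1}`, forcing equality. In degree `t`, `h_t ≤ t` has
the expansion `C(t,t) + C(t-1,t-1) + ⋯`, for which `(h_t)_{<t>} = 0`; as `R/(I+(L))` is generated
in degree one, `g_t = 0` propagates to all higher degrees.
-/

namespace MvPolynomial

variable {σ R : Type*} [CommSemiring R]

attribute [local instance] MvPolynomial.gradedAlgebra in
theorem homogeneousComponent_mul_of_isHomogeneous_left {L : MvPolynomial σ R} {e : ℕ}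
    (hL : L.IsHomogeneous e) (p : MvPolynomial σ R) (n : ℕ) :
    homogeneousComponent (e + n) (L * p) = L * homogeneousComponent n p := by
  rw [← decomposition.decompose'_apply, ← decomposition.decompose'_apply]
  exact DirectSum.coe_decompose_mul_add_of_left_mem (homogeneousSubmodule σ R)
    ((mem_homogeneousSubmodule e L).mpr hL)

theorem homogeneousSubmodule_le_restrictScalars_of_le {J : Ideal (MvPolynomial σ R)} {n m : ℕ}
    (h : homogeneousSubmodule σ R n ≤ J.restrictScalars R) (hnm : n ≤ m) :
    homogeneousSubmodule σ R m ≤ J.restrictScalars R := by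
  induction m, hnm using Nat.le_induction with
  | base => exact h
  | succ m _ ih =>
    rw [← homogeneousSubmodule_one_pow, pow_succ', homogeneousSubmodule_one_pow, Submodule.mul_le]
    exact fun l _ f hf => J.mul_mem_left l (ih hf)

instance [Finite σ] (n : ℕ) : Module.Finite R (homogeneousSubmodule σ R n) :=
  Module.Finite.iff_fg.mpr (homogeneousSubmodule_fg σ R n)

end MvPolynomial

theorem Submodule.finrank_le_finrank_map_add_of_inf_ker_le {K M N : Type*} [DivisionRing K]
    [AddCommGroup M] [Module K M] [AddCommGroup N] [Module K N] (φ : M →ₗ[K] N)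
    {V W : Submodule K M} [FiniteDimensional K V] [FiniteDimensional K W]
    (h : V ⊓ LinearMap.ker φ ≤ W) :
    Module.finrank K V ≤ Module.finrank K (V.map φ) + Module.finrank K W := by
  have hrn := LinearMap.finrank_range_add_finrank_ker (φ.domRestrict V)
  have hker : Module.finrank K (LinearMap.ker (φ.domRestrict V)) ≤ Module.finrank K W := by
    rw [← Submodule.finrank_map_subtype_eq, LinearMap.ker_domRestrict, Submodule.map_comap_subtype]
    exact Submodule.finrank_mono h
  rw [LinearMap.range_domRestrict] at hrn
  omega

section HilbertFunction

variable {k : Type} [Field k] {r : ℕ}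

instance (I : Ideal (MvPolynomial (Fin r) k)) (n : ℕ) : FiniteDimensional k (quotPiece k I n) :=
  Module.Finite.map _ _

theorem quotPiece_map_factorₐ {I J : Ideal (MvPolynomial (Fin r) k)} (hIJ : I ≤ J) (n : ℕ) :
    (quotPiece k I n).map (Ideal.Quotient.factorₐ k hIJ).toLinearMap = quotPiece k J n := by
  rw [quotPiece, quotPiece, ← Submodule.map_comp]
  rfl

theorem hilb_le_of_le {I J : Ideal (MvPolynomial (Fin r) k)} (hIJ : I ≤ J) (n : ℕ) :
    hilb k J n ≤ hilb k I n := by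
  rw [hilb, hilb, ← quotPiece_map_factorₐ hIJ]
  exact Submodule.finrank_map_le _ _

theorem hilb_eq_zero_iff (J : Ideal (MvPolynomial (Fin r) k)) (n : ℕ) :
    hilb k J n = 0 ↔ homogeneousSubmodule (Fin r) k n ≤ J.restrictScalars k := by
  have hker : LinearMap.ker (Ideal.Quotient.mkₐ k J).toLinearMap = J.restrictScalars k := by
    ext f
    simp [Ideal.Quotient.eq_zero_iff_mem]
  rw [hilb, Submodule.finrank_eq_zero, quotPiece, ← le_bot_iff, Submodule.map_le_iff_le_comap,
    Submodule.comap_bot, hker]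

theorem hilb_eq_zero_of_le {J : Ideal (MvPolynomial (Fin r) k)} {n m : ℕ}
    (h : hilb k J n = 0) (hnm : n ≤ m) : hilb k J m = 0 :=
  (hilb_eq_zero_iff J m).mpr
    (homogeneousSubmodule_le_restrictScalars_of_le ((hilb_eq_zero_iff J n).mp h) hnm)

theorem exists_sub_mul_mem_of_mem_sup_span {I : Ideal (MvPolynomial (Fin r) k)}
    (hI : IsHomogIdeal I) {L f : MvPolynomial (Fin r) k} {e n : ℕ} (hL : L.IsHomogeneous e)
    (hf : f.IsHomogeneous (e + n)) (hfJ : f ∈ I ⊔ Ideal.span {L}) :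
    ∃ p ∈ homogeneousSubmodule (Fin r) k n, f - L * p ∈ I := by
  obtain ⟨g, hg, _, hl, rfl⟩ := Submodule.mem_sup.mp hfJ
  obtain ⟨q, rfl⟩ := Ideal.mem_span_singleton'.mp hl
  refine ⟨homogeneousComponent n q, homogeneousComponent_mem n q, ?_⟩
  have hfg : g + q * L = homogeneousComponent (e + n) g + L * homogeneousComponent n q := by
    rw [← homogeneousComponent_of_mem hf |>.trans (if_pos rfl), map_add, mul_comm,
      homogeneousComponent_mul_of_isHomogeneous_left hL]
  rw [hfg, add_sub_cancel_right]
  exact hI g hg _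

theorem hilb_le_hilb_sup_span_add {I : Ideal (MvPolynomial (Fin r) k)} (hI : IsHomogIdeal I)
    {L : MvPolynomial (Fin r) k} {e : ℕ} (hL : L.IsHomogeneous e) (n : ℕ) :
    hilb k I (e + n) ≤ hilb k (I ⊔ Ideal.span {L}) (e + n) + hilb k I n := by
  have hIJ : I ≤ I ⊔ Ideal.span {L} := le_sup_left
  have hker : quotPiece k I (e + n) ⊓ LinearMap.ker (Ideal.Quotient.factorₐ k hIJ).toLinearMap ≤
      (quotPiece k I n).map (LinearMap.mulLeft k (Ideal.Quotient.mk I L)) := by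
    rintro _ ⟨⟨f, hf, rfl⟩, hfJ⟩
    obtain ⟨p, hp, hfp⟩ := exists_sub_mul_mem_of_mem_sup_span hI hL hf
      (Ideal.Quotient.eq_zero_iff_mem.mp hfJ)
    refine ⟨Ideal.Quotient.mk I p, ⟨p, hp, rfl⟩, ?_⟩
    rw [LinearMap.mulLeft_apply, ← map_mul, AlgHom.toLinearMap_apply, Ideal.Quotient.mkₐ_eq_mk,
      Ideal.Quotient.eq.mpr hfp]
  calc hilb k I (e + n)
      ≤ Module.finrank k ((quotPiece k I (e + n)).map (Ideal.Quotient.factorₐ k hIJ).toLinearMap) +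
        Module.finrank k ((quotPiece k I n).map (LinearMap.mulLeft k (Ideal.Quotient.mk I L))) :=
        Submodule.finrank_le_finrank_map_add_of_inf_ker_le _ hker
    _ ≤ hilb k (I ⊔ Ideal.span {L}) (e + n) + hilb k I n := by
        rw [quotPiece_map_factorₐ]
        exact Nat.add_le_add_left (Submodule.finrank_map_le _ _) _

end HilbertFunction

theorem IsBinExp.eq_sum_choose_pred_add {n i j : ℕ} {c : ℕ → ℕ} (h : IsBinExp n i j c) :
    n = ∑ m ∈ Icc j i, (c m - 1).choose m + ∑ m ∈ Icc j i, (c m - 1).choose (m - 1) := by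
  obtain ⟨hj, hji, hjc, hc, rfl⟩ := h
  rw [← sum_add_distrib]
  refine sum_congr rfl fun m hm => ?_
  have hcm : j ≤ c m := hjc.trans (hc.monotoneOn ⟨le_rfl, hji⟩ (mem_Icc.mp hm) (mem_Icc.mp hm).1)
  obtain ⟨a, ha⟩ : ∃ a, c m = a + 1 := ⟨c m - 1, by omega⟩
  obtain ⟨b, rfl⟩ : ∃ b, m = b + 1 := ⟨m - 1, by have := (mem_Icc.mp hm).1; omega⟩
  rw [ha, Nat.add_sub_cancel, Nat.add_sub_cancel, Nat.choose_succ_succ', add_comm]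

theorem exists_isBinExp_sum_choose_pred_eq_zero {n i : ℕ} (hn : 1 ≤ n) (hni : n ≤ i) :
    ∃ j c, IsBinExp n i j c ∧ ∑ m ∈ Icc j i, (c m - 1).choose m = 0 := by
  refine ⟨i + 1 - n, id, ⟨by omega, by omega, le_rfl, strictMono_id.strictMonoOn _, ?_⟩, ?_⟩
  · simp only [id, Nat.choose_self, sum_const, Nat.card_Icc, smul_eq_mul, mul_one]
    omega
  · refine sum_eq_zero fun m hm => Nat.choose_eq_zero_of_lt ?_
    have := (mem_Icc.mp hm).1
    simp only [id]
    omega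

theorem stmt15_general (k : Type) [Field k] (r : ℕ)
    (I : Ideal (MvPolynomial (Fin r) k)) (hIhom : IsHomogIdeal I)
    (t : ℕ) (hht : hilb k I t ≤ t)
    (hcond : ∀ i : ℕ, 1 ≤ i → i < t →
      ∃ (j : ℕ) (c : ℕ → ℕ), IsBinExp (hilb k I i) i j c ∧
        hilb k I (i - 1) = ∑ m ∈ Finset.Icc j i, (c m - 1).choose (m - 1))
    (L : MvPolynomial (Fin r) k) (hL : L ∈ homogeneousSubmodule (Fin r) k 1)
    (hGreen : ∀ d : ℕ, 1 ≤ d → ∀ (j : ℕ) (c : ℕ → ℕ), IsBinExp (hilb k I d) d j c →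
      hilb k (I ⊔ Ideal.span {L}) d ≤ ∑ m ∈ Finset.Icc j d, (c m - 1).choose m) :
    (∀ i : ℕ, 1 ≤ i → i < t →
      hilb k (I ⊔ Ideal.span {L}) i = hilb k I i - hilb k I (i - 1)) ∧
    (∀ i : ℕ, t ≤ i → hilb k (I ⊔ Ideal.span {L}) i = 0) := by
  refine ⟨fun i hi hit => ?_, fun i hti => ?_⟩
  · obtain ⟨j, c, hexp, hprev⟩ := hcond i hi hit
    have hpascal := hexp.eq_sum_choose_pred_add
    have hupper := hGreen i hi j c hexp
    obtain ⟨n, rfl⟩ : ∃ n, i = 1 + n := ⟨i - 1, by omega⟩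
    have hlower := hilb_le_hilb_sup_span_add hIhom hL n
    rw [Nat.add_sub_cancel_left] at hprev ⊢
    omega
  · suffices hilb k (I ⊔ Ideal.span {L}) t = 0 from hilb_eq_zero_of_le this hti
    obtain h0 | hpos := Nat.eq_zero_or_pos (hilb k I t)
    · exact Nat.le_zero.mp (h0 ▸ hilb_le_of_le le_sup_left t)
    · obtain ⟨j, c, hexp, hzero⟩ := exists_isBinExp_sum_choose_pred_eq_zero hpos hht
      exact Nat.le_zero.mp (hzero ▸ hGreen t (hpos.trans_le hht) j c hexp)

/-- the computation in the proof of Theorem 5. Let `A = R/I`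
be artinian over a field of characteristic zero, `t` the smallest integer with
`h_t ≤ t`, and suppose `h_{i−1} = ((h_i)_{(i)})^{−1}_{−1}` for `i = 1, …, t−1`.
Then for every linear form `L` satisfying the conclusion of Green's theorem
(`dim_k (R/(I+(L)))_d ≤ (h_d)_{<d>}` for all `d ≥ 1`), one has
`dim_k (R/(I+(L)))_i = h_i − h_{i−1}` for `1 ≤ i ≤ t−1` and
`dim_k (R/(I+(L)))_i = 0` for `i ≥ t`. -/
theorem stmt15 (k : Type) [Field k] [CharZero k] (r : ℕ)
    (I : Ideal (MvPolynomial (Fin r) k)) (hIhom : IsHomogIdeal I)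
    (hart : ArtinianQuot k I)
    (t : ℕ) (hht : hilb k I t ≤ t) (htmin : ∀ s : ℕ, s < t → s < hilb k I s)
    (hcond : ∀ i : ℕ, 1 ≤ i → i < t →
      ∃ (j : ℕ) (c : ℕ → ℕ), IsBinExp (hilb k I i) i j c ∧
        hilb k I (i - 1) = ∑ m ∈ Finset.Icc j i, (c m - 1).choose (m - 1))
    (L : MvPolynomial (Fin r) k) (hL : L ∈ homogeneousSubmodule (Fin r) k 1)
    (hGreen : ∀ d : ℕ, 1 ≤ d → ∀ (j : ℕ) (c : ℕ → ℕ), IsBinExp (hilb k I d) d j c →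
      hilb k (I ⊔ Ideal.span {L}) d ≤ ∑ m ∈ Finset.Icc j d, (c m - 1).choose m) :
    (∀ i : ℕ, 1 ≤ i → i < t →
      hilb k (I ⊔ Ideal.span {L}) i = hilb k I i - hilb k I (i - 1)) ∧
    (∀ i : ℕ, t ≤ i → hilb k (I ⊔ Ideal.span {L}) i = 0) :=
  stmt15_general k r I hIhom t hht hcond L hL hGreen
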